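/- For all a ∈ A and all x ∈ Ae₁ + Ae₂ + Ae₃ one has x·(a e₀) = a* x. -/

import Mathlib

open LaurentPolynomial

/-- `A = ℤ[z, z⁻¹]`, the Laurent polynomial ring over the integers. -/
abbrev A : Type := LaurentPolynomial ℤ

/-- The conjugation `f(z) ↦ f(z⁻¹)` on `A`. -/
noncomputable def conj : A →+* A := (LaurentPolynomial.invert (R := ℤ)).toRingEquiv.toRingHom

/-- The fixed subring `A₀ = {f ∈ A | f* = f}`. -/
noncomputable def A0 : Subring A := RingHom.eqLocus conj (RingHom.id A)

/-- `E = A⁴`. -/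
abbrev E : Type := Fin 4 → A

/-- The norm `N(x) = ∑ₖ xₖ xₖ*`. -/
noncomputable def N (x : E) : A := ∑ k, x k * conj (x k)

/-- The standard `A`-basis vectors of `E = A⁴`. -/
noncomputable def e (k : Fin 4) : E := Pi.single k 1

/-- Yang's multiplication `x ∘ y = (p, q, r, s)`. -/
noncomputable def yang (x y : E) : E :=
  ![x 0 * y 0 - x 1 * conj (y 1) - x 2 * conj (y 2) - x 3 * conj (y 3),
    x 0 * y 1 + x 1 * conj (y 0) + conj (x 2) * conj (y 3) - conj (x 3) * conj (y 2),
    x 0 * y 2 - conj (x 1) * conj (y 3) + x 2 * conj (y 0) + conj (x 3) * conj (y 1),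
    x 0 * y 3 + conj (x 1) * conj (y 2) - conj (x 2) * conj (y 1) + x 3 * conj (y 0)]

/-! Write `B = polar N` and `⟨x, y⟩ = ∑ₖ xₖ yₖ*`, so that `B(x, y) = ⟨x, y⟩ + ⟨x, y⟩*`.
Polarizing the Lagrange identity gives `B(w p, w q) = N(w) B(p, q)` and, in both variables,
`B(w p, w' q) + B(w q, w' p) = B(w, w') B(p, q)`; for `x₀ = 0` we have `B(x, e₀) = 0`, so left
multiplication by `x` is `B`-skew. If `a = a*` the claim is just `A₀`-linearity. Otherwise, for
`c = ⟨x(a e₀), x⟩` these identities give `c + c* = (a + a*) N(x)` and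
`a* c + a c* = (a² + a*²) N(x)`, whence `(a* - a)(c - a* N(x)) = 0` and `c = a* N(x)`. Then
`N(x(a e₀) - a* x) = 0`, and `N` is anisotropic because the constant coefficient of `f f*` is the
sum of the squares of the coefficients of `f`. -/

open QuadraticMap

namespace LaurentPolynomial

variable {R : Type*} [CommRing R]

lemma coeff_zero_mul_invert_self (f : R[T;T⁻¹]) :
    (f * invert f).coeff 0 = ∑ n ∈ f.coeff.support, f.coeff n * f.coeff n := by
  rw [AddMonoidAlgebra.coeff_mul_apply_left]
  simp [Finsupp.sum]

variable [LinearOrder R] [IsStrictOrderedRing R]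

lemma coeff_zero_mul_invert_self_nonneg (f : R[T;T⁻¹]) : 0 ≤ (f * invert f).coeff 0 := by
  rw [coeff_zero_mul_invert_self]
  exact Finset.sum_nonneg fun n _ => mul_self_nonneg _

lemma eq_zero_of_coeff_zero_mul_invert_self_eq_zero {f : R[T;T⁻¹]}
    (h : (f * invert f).coeff 0 = 0) : f = 0 := by
  rw [coeff_zero_mul_invert_self,
    Finset.sum_eq_zero_iff_of_nonneg fun n _ => mul_self_nonneg _] at h
  ext n
  by_cases hn : n ∈ f.coeff.support
  · exact mul_self_eq_zero.mp (h n hn)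
  · exact Finsupp.notMem_support_iff.mp hn

lemma eq_zero_of_sum_mul_invert_self_eq_zero {ι : Type*} {s : Finset ι} {f : ι → R[T;T⁻¹]}
    (h : ∑ i ∈ s, f i * invert (f i) = 0) (i : ι) (hi : i ∈ s) : f i = 0 := by
  have hcoeff := congrArg (fun g : R[T;T⁻¹] => g.coeff 0) h
  simp only [AddMonoidAlgebra.coeff_sum, Finset.sum_apply', AddMonoidAlgebra.coeff_zero,
    Finsupp.coe_zero, Pi.zero_apply] at hcoeff
  rw [Finset.sum_eq_zero_iff_of_nonneg fun i _ => coeff_zero_mul_invert_self_nonneg _] at hcoeff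
  exact eq_zero_of_coeff_zero_mul_invert_self_eq_zero (hcoeff i hi)

end LaurentPolynomial

lemma conj_conj (f : A) : conj (conj f) = f := involutive_invert f

noncomputable def hermForm (x y : E) : A := ∑ k, x k * conj (y k)

lemma hermForm_self (x : E) : hermForm x x = N x := rfl

lemma conj_hermForm (x y : E) : conj (hermForm x y) = hermForm y x := by
  simp only [hermForm, map_sum, map_mul, conj_conj, mul_comm]

lemma conj_N (x : E) : conj (N x) = N x := by
  rw [← hermForm_self, conj_hermForm]

lemma hermForm_add_left (x y z : E) : hermForm (x + y) z = hermForm x z + hermForm y z := by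
  simp only [hermForm, Pi.add_apply, add_mul, Finset.sum_add_distrib]

lemma hermForm_add_right (x y z : E) : hermForm x (y + z) = hermForm x y + hermForm x z := by
  simp only [hermForm, Pi.add_apply, map_add, mul_add, Finset.sum_add_distrib]

lemma hermForm_smul_left (a : A) (x y : E) : hermForm (a • x) y = a * hermForm x y := by
  simp only [hermForm, Pi.smul_apply, smul_eq_mul, Finset.mul_sum, mul_assoc]

lemma hermForm_smul_right (a : A) (x y : E) : hermForm x (a • y) = conj a * hermForm x y := by
  simp only [hermForm, Pi.smul_apply, smul_eq_mul, map_mul, Finset.mul_sum, mul_left_comm]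

lemma hermForm_e_zero (x : E) : hermForm x (e 0) = x 0 := by
  simp [hermForm, e, Fin.sum_univ_four]

lemma N_smul (a : A) (x : E) : N (a • x) = a * conj a * N x := by
  simp only [← hermForm_self, hermForm_smul_left, hermForm_smul_right]
  ring

lemma e_zero_zero : e 0 0 = 1 := Pi.single_eq_same _ _

lemma N_e_zero : N (e 0) = 1 := by
  rw [← hermForm_self, hermForm_e_zero, e_zero_zero]

lemma polar_N (x y : E) : polar N x y = hermForm x y + hermForm y x := by
  simp only [polar, ← hermForm_self, hermForm_add_left, hermForm_add_right]
  ring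

lemma polar_N_add_left (x y z : E) : polar N (x + y) z = polar N x z + polar N y z := by
  simp only [polar_N, hermForm_add_left, hermForm_add_right]
  ring

lemma polar_N_add_right (x y z : E) : polar N x (y + z) = polar N x y + polar N x z := by
  rw [polar_comm, polar_N_add_left, polar_comm N y, polar_comm N z]

lemma polar_N_smul_right (a : A) (x y : E) :
    polar N x (a • y) = conj a * hermForm x y + a * conj (hermForm x y) := by
  rw [polar_N, hermForm_smul_right, hermForm_smul_left, conj_hermForm]

lemma polar_N_smul_e_zero (a : A) (x : E) :
    polar N x (a • e 0) = conj a * x 0 + a * conj (x 0) := by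
  rw [polar_N_smul_right, hermForm_e_zero]

lemma polar_N_e_zero (x : E) : polar N x (e 0) = x 0 + conj (x 0) := by
  simpa using polar_N_smul_e_zero 1 x

lemma N_add (x y : E) : N (x + y) = N x + N y + polar N x y := by
  rw [polar]
  ring

lemma N_sub (x y : E) : N (x - y) = N x + N y - polar N x y := by
  simp only [polar_N, ← hermForm_self, hermForm, Pi.sub_apply, map_sub, ← Finset.sum_add_distrib,
    ← Finset.sum_sub_distrib]
  exact Finset.sum_congr rfl fun _ _ => by ring

lemma eq_zero_of_N_eq_zero {x : E} (h : N x = 0) : x = 0 :=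
  funext fun k => eq_zero_of_sum_mul_invert_self_eq_zero h k (Finset.mem_univ k)

lemma eq_of_N_eq_of_hermForm_eq {y u : E} (hN : N y = N u) (hyu : hermForm y u = N u) :
    y = u := by
  have h : N (y - u) = 0 := by
    rw [N_sub, polar_N, ← conj_hermForm y u, hyu, conj_N, hN]
    ring
  exact sub_eq_zero.mp (eq_zero_of_N_eq_zero h)

lemma map_smul_of_conj_eq (f : E →ₗ[A0] E) {b : A} (hb : conj b = b) (v : E) :
    f (b • v) = b • f v :=
  f.map_smul ⟨b, hb⟩ v

section Composition

variable {mul : E →ₗ[A0] E →ₗ[A0] E}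

lemma polar_N_mul_left (hL : ∀ x y : E, N (mul x y) = N x * N y) (w p q : E) :
    polar N (mul w p) (mul w q) = N w * polar N p q := by
  simp only [polar, ← map_add, hL]
  ring

lemma polar_N_mul_mul (hL : ∀ x y : E, N (mul x y) = N x * N y) (w w' p q : E) :
    polar N (mul w p) (mul w' q) + polar N (mul w q) (mul w' p) = polar N w w' * polar N p q := by
  have h := polar_N_mul_left hL (w + w') p q
  simp only [map_add, LinearMap.add_apply, polar_N_add_left, polar_N_add_right,
    polar_N_mul_left hL, N_add, polar_comm N (mul w' p) (mul w q)] at h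
  linear_combination h

lemma polar_N_mul_smul_e_zero (hL : ∀ x y : E, N (mul x y) = N x * N y)
    (hright : ∀ x : E, mul x (e 0) = x) (v : E) (b : A) :
    polar N (mul v (b • e 0)) v = (b + conj b) * N v := by
  have h := polar_N_mul_left hL v (b • e 0) (e 0)
  rw [hright, polar_comm N (b • e 0), polar_N_smul_e_zero, e_zero_zero, map_one] at h
  linear_combination h

lemma polar_N_mul_add_swap_eq_zero (hL : ∀ x y : E, N (mul x y) = N x * N y)
    (hleft : ∀ x : E, mul (e 0) x = x) {v : E} (hv : v 0 = 0) (p q : E) :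
    polar N (mul v p) q + polar N (mul v q) p = 0 := by
  have h := polar_N_mul_mul hL v (e 0) p q
  rwa [hleft, hleft, polar_N_e_zero, hv, map_zero, add_zero, zero_mul] at h

lemma polar_N_mul_self_smul_e_zero (hL : ∀ x y : E, N (mul x y) = N x * N y)
    (hleft : ∀ x : E, mul (e 0) x = x) (hright : ∀ x : E, mul x (e 0) = x) {v : E}
    (hv : v 0 = 0) (b : A) :
    polar N (mul v v) (b • e 0) = -((b + conj b) * N v) := by
  have h := polar_N_mul_add_swap_eq_zero hL hleft hv v (b • e 0)
  rw [polar_N_mul_smul_e_zero hL hright] at h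
  linear_combination h

lemma hermForm_mul_smul_e_zero (hL : ∀ x y : E, N (mul x y) = N x * N y)
    (hleft : ∀ x : E, mul (e 0) x = x) (hright : ∀ x : E, mul x (e 0) = x)
    (hA : ∀ (a : A) (y : E), mul (a • e 0) y = a • y) {v : E} (hv : v 0 = 0) {a : A}
    (ha : conj a ≠ a) :
    hermForm (mul v (a • e 0)) v = conj a * N v := by
  set c := hermForm (mul v (a • e 0)) v
  have hsum : c + conj c = (a + conj a) * N v := by
    rw [← polar_N_mul_smul_e_zero hL hright v a, polar_N, conj_hermForm]
  have hmix : conj a * c + a * conj c = (a * a + conj (a * a)) * N v := by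
    have h := polar_N_mul_mul hL v (a • e 0) (a • e 0) v
    rw [hA, hA, smul_smul, polar_N_mul_self_smul_e_zero hL hleft hright hv, polar_N_smul_right,
      polar_N_smul_e_zero, hv, map_zero, mul_zero, mul_zero, add_zero, zero_mul] at h
    linear_combination h
  apply mul_left_cancel₀ (sub_ne_zero.mpr ha)
  rw [map_mul] at hmix
  linear_combination hmix - a * hsum

end Composition

/-- Lemma 4.5: for all `a ∈ A` and all `x ∈ Ae₁ + Ae₂ + Ae₃` (i.e. `x₀ = 0`),
`x·(a e₀) = a* x`. -/
theorem right_scalar_action (mul : E →ₗ[A0] E →ₗ[A0] E)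
    (hL : ∀ x y : E, N (mul x y) = N x * N y)
    (hid : ∀ x : E, mul (e 0) x = x ∧ mul x (e 0) = x)
    (hA : ∀ (a : A) (y : E), mul (a • e 0) y = a • y) :
    ∀ (a : A) (x : E), x 0 = 0 → mul x (a • e 0) = conj a • x := by
  intro a x hx
  by_cases ha : conj a = a
  · rw [map_smul_of_conj_eq (mul x) ha, (hid x).2, ha]
  · apply eq_of_N_eq_of_hermForm_eq
    · rw [hL, N_smul, N_smul, N_e_zero, conj_conj]
      ring
    · rw [hermForm_smul_right, conj_conj, hermForm_mul_smul_e_zero hL (fun y => (hid y).1)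
        (fun y => (hid y).2) hA hx ha, N_smul, conj_conj]
      ring
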